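/- For two positive semidefinite matrices Σ₁, Σ₂ ∈ R^{t×t}, the operator norm of the difference of their square roots satisfies ‖Σ₁^{1/2} - Σ₂^{1/2}‖_op ≤ t·‖Σ₁ - Σ₂‖_op^{1/2}. -/

import Mathlib

open Matrix

/-- Spectral (operator) norm of a real square matrix, acting on Euclidean space. -/
noncomputable def opNorm {n : ℕ} (M : Matrix (Fin n) (Fin n) ℝ) : ℝ :=
  ‖Matrix.toEuclideanCLM (𝕜 := ℝ) M‖

open scoped ComplexOrder in
/-- The positive semidefinite square root of a positive semidefinite matrix
(the definition `Matrix.PosSemidef.sqrt` of the older Mathlib, since removed). -/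
noncomputable def Matrix.PosSemidef.sqrt {n 𝕜 : Type*} [Fintype n] [RCLike 𝕜] [DecidableEq n]
    {A : Matrix n n 𝕜} (hA : A.PosSemidef) : Matrix n n 𝕜 :=
  hA.1.eigenvectorUnitary.1 * diagonal ((↑) ∘ (√·) ∘ hA.1.eigenvalues) *
  (star hA.1.eigenvectorUnitary : Matrix n n 𝕜)

/-! Write `D = P - Q` for positive operators `P`, `Q` on a finite-dimensional real inner product
space. A self-adjoint operator there has an eigenvalue `μ` with `|μ| = ‖D‖`; take a unit
eigenvector `x`. Since `P² - Q² = P D + D Q`, we get `⟪(P² - Q²) x, x⟫ = μ (⟪P x, x⟫ + ⟪Q x, x⟫)`,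
and `μ = ⟪P x, x⟫ - ⟪Q x, x⟫` forces `|μ| ≤ ⟪P x, x⟫ + ⟪Q x, x⟫`. Hence
`‖D‖² ≤ |μ| (⟪P x, x⟫ + ⟪Q x, x⟫) ≤ ‖P² - Q²‖`, which for `P = S1^{1/2}`, `Q = S2^{1/2}` reads
`‖S1^{1/2} - S2^{1/2}‖² ≤ ‖S1 - S2‖`. -/

open scoped RealInnerProductSpace

open ContinuousLinearMap in
theorem LinearMap.IsSymmetric.exists_hasEigenvalue_norm_eq {𝕜 E : Type*} [RCLike 𝕜]
    [NormedAddCommGroup E] [InnerProductSpace 𝕜 E] [FiniteDimensional 𝕜 E] {T : E →L[𝕜] E}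
    (hT : (T : E →ₗ[𝕜] E).IsSymmetric) (hT0 : T ≠ 0) :
    ∃ μ : 𝕜, Module.End.HasEigenvalue (T : E →ₗ[𝕜] E) μ ∧ ‖μ‖ = ‖T‖ := by
  have := FiniteDimensional.complete 𝕜 E
  have hrad := T.spectralRadius_eq_nnnorm (isSelfAdjoint_iff_isSymmetric.mpr hT)
  have hne : (spectrum 𝕜 T).Nonempty := by
    by_contra h
    have hzero : spectralRadius 𝕜 T = 0 := by
      simp [spectralRadius, Set.not_nonempty_iff_eq_empty.mp h]
    exact hT0 (nnnorm_eq_zero.mp (by exact_mod_cast hrad.symm.trans hzero))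
  obtain ⟨k, hk, hnorm⟩ := spectrum.exists_nnnorm_eq_spectralRadius_of_nonempty hne
  rw [spectrum_eq] at hk
  refine ⟨k, Module.End.hasEigenvalue_iff_mem_spectrum.mpr hk, ?_⟩
  rw [hrad, ENNReal.coe_inj] at hnorm
  exact congrArg NNReal.toReal hnorm

namespace ContinuousLinearMap

variable {E : Type*} [NormedAddCommGroup E] [InnerProductSpace ℝ E]

theorem IsPositive.sq_le_norm_mul_self_sub_mul_self_of_apply_eq_smul {P Q : E →L[ℝ] E}
    (hP : P.IsPositive) (hQ : Q.IsPositive) {μ : ℝ} {x : E} (hx : ‖x‖ = 1)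
    (hμ : (P - Q) x = μ • x) : μ ^ 2 ≤ ‖P * P - Q * Q‖ := by
  have ha : 0 ≤ ⟪P x, x⟫ := hP.inner_nonneg_left x
  have hb : 0 ≤ ⟪Q x, x⟫ := hQ.inner_nonneg_left x
  have hμ_eq : μ = ⟪P x, x⟫ - ⟪Q x, x⟫ := by
    rw [← inner_sub_left, ← _root_.sub_apply, hμ, real_inner_smul_left,
      real_inner_self_eq_norm_sq, hx]
    ring
  have hsymm : ∀ y z, ⟪(P - Q) y, z⟫ = ⟪y, (P - Q) z⟫ := hP.isSymmetric.sub hQ.isSymmetric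
  have hquad : ⟪(P * P - Q * Q) x, x⟫ = μ * (⟪P x, x⟫ + ⟪Q x, x⟫) := by
    have hsplit : (P * P - Q * Q) x = P ((P - Q) x) + (P - Q) (Q x) := by
      simp only [_root_.sub_apply, map_sub]; abel
    rw [hsplit, inner_add_left, hμ, map_smul, real_inner_smul_left, hsymm, hμ,
      real_inner_smul_right, real_inner_comm x (Q x)]
    ring
  have hbound : |⟪(P * P - Q * Q) x, x⟫| ≤ ‖P * P - Q * Q‖ := by
    simpa [hx] using (abs_real_inner_le_norm _ x).trans
      (mul_le_mul_of_nonneg_right ((P * P - Q * Q).le_opNorm x) (norm_nonneg x))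
  have habs : |μ| ≤ ⟪P x, x⟫ + ⟪Q x, x⟫ := abs_le.mpr ⟨by linarith, by linarith⟩
  calc μ ^ 2 = |μ| * |μ| := by rw [← sq_abs, sq]
    _ ≤ |μ| * (⟪P x, x⟫ + ⟪Q x, x⟫) := by gcongr
    _ = |⟪(P * P - Q * Q) x, x⟫| := by
      rw [hquad, abs_mul, abs_of_nonneg (add_nonneg ha hb)]
    _ ≤ ‖P * P - Q * Q‖ := hbound

theorem IsPositive.norm_sub_sq_le [FiniteDimensional ℝ E] {P Q : E →L[ℝ] E}
    (hP : P.IsPositive) (hQ : Q.IsPositive) : ‖P - Q‖ ^ 2 ≤ ‖P * P - Q * Q‖ := by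
  by_cases hPQ : P - Q = 0
  · simp [hPQ]
  have hsymm : ((P - Q : E →L[ℝ] E) : E →ₗ[ℝ] E).IsSymmetric :=
    hP.isSymmetric.sub hQ.isSymmetric
  obtain ⟨μ, hμ, hnorm⟩ := hsymm.exists_hasEigenvalue_norm_eq hPQ
  obtain ⟨v, hv⟩ := hμ.exists_hasEigenvector
  have hv0 : ‖v‖ ≠ 0 := norm_ne_zero_iff.mpr hv.2
  have hunit : ‖‖v‖⁻¹ • v‖ = 1 := by rw [norm_smul, norm_inv, norm_norm, inv_mul_cancel₀ hv0]
  have heigen : (P - Q) (‖v‖⁻¹ • v) = μ • ‖v‖⁻¹ • v := by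
    rw [map_smul, ← coe_coe, hv.apply_eq_smul, smul_comm]
  rw [← hnorm, Real.norm_eq_abs, sq_abs]
  exact hP.sq_le_norm_mul_self_sub_mul_self_of_apply_eq_smul hQ hunit heigen

end ContinuousLinearMap

open scoped ComplexOrder

namespace Matrix.PosSemidef

variable {n 𝕜 : Type*} [Fintype n] [DecidableEq n] [RCLike 𝕜] {A : Matrix n n 𝕜}

theorem posSemidef_sqrt (hA : A.PosSemidef) : hA.sqrt.PosSemidef := by
  apply PosSemidef.mul_mul_conjTranspose_same
  refine posSemidef_diagonal_iff.mpr fun i ↦ ?_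
  simp only [Function.comp_apply, RCLike.ofReal_nonneg]
  exact Real.sqrt_nonneg _

theorem sqrt_mul_self (hA : A.PosSemidef) : hA.sqrt * hA.sqrt = A := by
  set U : Matrix n n 𝕜 := ↑hA.1.eigenvectorUnitary
  set D : Matrix n n 𝕜 := diagonal ((↑) ∘ (√·) ∘ hA.1.eigenvalues)
  have hU : star U * U = 1 := Unitary.star_mul_self_of_mem hA.1.eigenvectorUnitary.prop
  have hD : D * D = diagonal ((↑) ∘ hA.1.eigenvalues) := by
    rw [diagonal_mul_diagonal]
    congr 1
    funext i
    simp only [Function.comp_apply, ← RCLike.ofReal_mul,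
      Real.mul_self_sqrt (hA.eigenvalues_nonneg i)]
  calc hA.sqrt * hA.sqrt = U * (D * (star U * U) * D) * star U := by
        simp only [sqrt, U, D, mul_assoc]
    _ = A := by rw [hU, mul_one, hD]; exact hA.1.spectral_theorem.symm

theorem isPositive_toEuclideanCLM (hA : A.PosSemidef) :
    (toEuclideanCLM (𝕜 := 𝕜) A).IsPositive := by
  rw [← ContinuousLinearMap.isPositive_toLinearMap_iff, coe_toEuclideanCLM_eq_toEuclideanLin,
    isPositive_toEuclideanLin_iff]
  exact hA

end Matrix.PosSemidef

theorem opNorm_sqrt_sub_sqrt_sq_le {n : ℕ} {A B : Matrix (Fin n) (Fin n) ℝ}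
    (hA : A.PosSemidef) (hB : B.PosSemidef) :
    opNorm (hA.sqrt - hB.sqrt) ^ 2 ≤ opNorm (A - B) := by
  have h := hA.posSemidef_sqrt.isPositive_toEuclideanCLM.norm_sub_sq_le
    hB.posSemidef_sqrt.isPositive_toEuclideanCLM
  rwa [← map_sub, ← map_mul, ← map_mul, hA.sqrt_mul_self, hB.sqrt_mul_self, ← map_sub] at h

/-- For positive semidefinite `S1, S2 ∈ ℝ^{t×t}`,
`‖S1^{1/2} - S2^{1/2}‖_op ≤ t ‖S1 - S2‖_op^{1/2}`. -/
theorem stmt_6 {t : ℕ} (S1 S2 : Matrix (Fin t) (Fin t) ℝ)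
    (h₁ : S1.PosSemidef) (h₂ : S2.PosSemidef) :
    opNorm (h₁.sqrt - h₂.sqrt) ≤ (t : ℝ) * Real.sqrt (opNorm (S1 - S2)) := by
  rcases Nat.eq_zero_or_pos t with rfl | ht
  · simp [opNorm, Subsingleton.elim (h₁.sqrt - h₂.sqrt) 0]
  calc opNorm (h₁.sqrt - h₂.sqrt) ≤ Real.sqrt (opNorm (S1 - S2)) :=
        Real.le_sqrt_of_sq_le (opNorm_sqrt_sub_sqrt_sq_le h₁ h₂)
    _ ≤ (t : ℝ) * Real.sqrt (opNorm (S1 - S2)) :=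
        le_mul_of_one_le_left (Real.sqrt_nonneg _) (by exact_mod_cast ht)
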